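/- arXiv:2406.09955 — 2 statements merged into one kernel-verified Lean document; each statement's English description precedes it below -/
import Mathlib

section
/- A semigroup (T_t)_{t≥0} of sublinear transition operators on ℬ is uniformly continuous if and only if limsup_{t↘0} ‖(T_t − I)/t‖ < ∞, where ‖·‖ denotes the operator seminorm. -/
open Filter Topology BoundedContinuousFunction ENNReal NNReal

/-- The space of (possibly nonlinear) operators on the Banach space `X →ᵇ ℝ`
of bounded (continuous, i.e. with `X` discrete: all) real-valued functions. -/
abbrev Op (X : Type*) [TopologicalSpace X] :=
  BoundedContinuousFunction X ℝ → BoundedContinuousFunction X ℝ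

/-- The operator seminorm `‖A‖ = sup {‖A f‖/‖f‖ : f ≠ 0}`, a value in `[0,∞]`. -/
noncomputable def opSemiNorm {X : Type*} [TopologicalSpace X] (A : Op X) : ℝ≥0∞ :=
  ⨆ (f : BoundedContinuousFunction X ℝ) (_ : f ≠ 0), (‖A f‖₊ : ℝ≥0∞) / (‖f‖₊ : ℝ≥0∞)

/-- The operator norm distance `d(A,B) = ‖A 0 − B 0‖∞ + ‖A − B‖`. -/
noncomputable def opDist {X : Type*} [TopologicalSpace X] (A B : Op X) : ℝ≥0∞ :=
  (‖A 0 - B 0‖₊ : ℝ≥0∞) + opSemiNorm (A - B)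

/-- Sublinear transition operator: (T1) positive homogeneity, (T2) subadditivity,
(T3) `T f ≤ sup f` pointwise. -/
def IsSublinearTransition {X : Type*} [TopologicalSpace X] (T : Op X) : Prop :=
  (∀ (c : ℝ), 0 ≤ c → ∀ f, T (c • f) = c • T f) ∧
  (∀ f g, ∀ x, T (f + g) x ≤ T f x + T g x) ∧
  (∀ f, ∀ x, T f x ≤ ⨆ y, f y)

/-- Sublinear rate operator: (Q1) positive homogeneity, (Q2) subadditivity,
(Q3) constants map to zero, (Q4) positive maximum principle. -/
def IsSublinearRate {X : Type*} [TopologicalSpace X] (Q : Op X) : Prop :=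
  (∀ (c : ℝ), 0 ≤ c → ∀ f, Q (c • f) = c • Q f) ∧
  (∀ f g, ∀ x, Q (f + g) x ≤ Q f x + Q g x) ∧
  (∀ (c : ℝ), Q (BoundedContinuousFunction.const X c) = 0) ∧
  (∀ f, ∀ x : X, (⨆ y, f y) = f x → 0 ≤ f x → Q f x ≤ 0)

/-- The Euler approximation `(I + (t/n) Q)^n` (n-fold composition). -/
noncomputable def euler {X : Type*} [TopologicalSpace X] (Q : Op X) (t : ℝ) (n : ℕ) : Op X :=
  (fun f => f + (t / (n : ℝ)) • Q f)^[n]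

/-- Uniform continuity of a semigroup `(S_t)_{t ≥ 0}`:
`‖S_s − S_t‖ → 0` as `s → t` (within `s ≥ 0`), for every `t ≥ 0`. -/
def IsUniformlyContinuousSG {X : Type*} [TopologicalSpace X] (S : ℝ → Op X) : Prop :=
  ∀ t : ℝ, 0 ≤ t →
    Tendsto (fun s => opSemiNorm (S s - S t)) (nhdsWithin t (Set.Ici 0)) (nhds 0)

/-- The indicator function `1_x` of the singleton `{x}`. -/
noncomputable def indic {X : Type*} [TopologicalSpace X] [DiscreteTopology X] (x : X) :
    BoundedContinuousFunction X ℝ :=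
  BoundedContinuousFunction.ofNormedAddCommGroup
    (Set.indicator {x} (fun _ => (1 : ℝ))) continuous_of_discreteTopology 1
    (by
      intro y
      classical
      rw [Set.indicator_apply]
      split_ifs <;> simp)

/-- Downward continuity (continuity from above) of an operator. -/
def DownwardContinuous {X : Type*} [TopologicalSpace X] (A : Op X) : Prop :=
  ∀ (f : ℕ → BoundedContinuousFunction X ℝ) (g : BoundedContinuousFunction X ℝ),
    (∀ n x, f (n + 1) x ≤ f n x) →
    (∀ x, Tendsto (fun n => f n x) atTop (nhds (g x))) →
    ∀ x, Tendsto (fun n => A (f n) x) atTop (nhds (A g x))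

/-! If `‖T_t - I‖ ≤ C t` for small `t`, then, each `T_s` being nonexpansive,
`‖T_s - T_t‖ ≤ C |s - t|`. Conversely, everything is controlled by the exit probabilities
`α_t(x) = T_t (1 - 1_x) x`: they bound `‖T_t - I‖ ≤ 2 sup_x α_t(x)`, and by the semigroup property
they grow at least linearly, `α_{nt}(x) ≥ n α_t(x) (1 - 2 n sup_y α_t(y))`. Since uniform
continuity keeps `α_s ≤ 1/16` for `s ≤ t₀`, this forces `sup_x α_t(x) ≤ t / (4 t₀)`. -/

section OpSemiNorm

variable {X : Type*} [TopologicalSpace X]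

theorem opSemiNorm_le_ofReal_iff {A : Op X} (h0 : A 0 = 0) {r : ℝ} (hr : 0 ≤ r) :
    opSemiNorm A ≤ ENNReal.ofReal r ↔ ∀ f, ‖A f‖ ≤ r * ‖f‖ := by
  have key : ∀ f : X →ᵇ ℝ, f ≠ 0 →
      ((‖A f‖₊ : ℝ≥0∞) / ‖f‖₊ ≤ ENNReal.ofReal r ↔ ‖A f‖ ≤ r * ‖f‖) := by
    intro f hf
    have hf' : (‖f‖₊ : ℝ≥0∞) ≠ 0 := by simpa using hf
    rw [ENNReal.div_le_iff hf' ENNReal.coe_ne_top, ← ENNReal.ofReal_coe_nnreal,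
      ← ENNReal.ofReal_coe_nnreal, ← ENNReal.ofReal_mul hr,
      ENNReal.ofReal_le_ofReal_iff (by positivity)]
    simp
  constructor
  · intro h f
    rcases eq_or_ne f 0 with rfl | hf
    · simp [h0]
    exact (key f hf).1 ((le_iSup₂ (f := fun (g : X →ᵇ ℝ) (_ : g ≠ 0) =>
      (‖A g‖₊ : ℝ≥0∞) / ‖g‖₊) f hf).trans h)
  · exact fun h => iSup₂_le fun f hf => (key f hf).2 (h f)

end OpSemiNorm

namespace IsSublinearTransition

variable {X : Type*} [TopologicalSpace X] {S : Op X}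

theorem map_zero (hS : IsSublinearTransition S) : S 0 = 0 := by
  simpa using hS.1 0 le_rfl 0

theorem apply_le_of_forall_le_zero (hS : IsSublinearTransition S) {f : X →ᵇ ℝ}
    (hf : ∀ y, f y ≤ 0) (x : X) : S f x ≤ 0 :=
  (hS.2.2 f x).trans (Real.iSup_le hf le_rfl)

theorem apply_sub_apply_le (hS : IsSublinearTransition S) (f g : X →ᵇ ℝ) (x : X) :
    S f x - S g x ≤ ‖f - g‖ := by
  have hsub := hS.2.1 g (f - g) x
  have hsup : S (f - g) x ≤ ‖f - g‖ :=
    (hS.2.2 (f - g) x).trans (Real.iSup_le (apply_le_norm _) (norm_nonneg _))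
  rw [add_sub_cancel] at hsub
  linarith

theorem mono (hS : IsSublinearTransition S) {f g : X →ᵇ ℝ} (h : ∀ y, f y ≤ g y) (x : X) :
    S f x ≤ S g x := by
  have hsub := hS.2.1 g (f - g) x
  rw [add_sub_cancel] at hsub
  linarith [hS.apply_le_of_forall_le_zero (f := f - g) (fun y => by simpa using h y) x]

theorem neg_apply_neg_le (hS : IsSublinearTransition S) (f : X →ᵇ ℝ) (x : X) :
    -S (-f) x ≤ S f x := by
  have h := hS.2.1 f (-f) x
  rw [add_neg_cancel, hS.map_zero] at h
  simp only [BoundedContinuousFunction.coe_zero, Pi.zero_apply] at h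
  linarith

theorem norm_sub_le (hS : IsSublinearTransition S) (f g : X →ᵇ ℝ) :
    ‖S f - S g‖ ≤ ‖f - g‖ := by
  refine (norm_le (norm_nonneg _)).2 fun x => ?_
  have h₁ := hS.apply_sub_apply_le f g x
  have h₂ := hS.apply_sub_apply_le g f x
  rw [norm_sub_rev] at h₂
  rw [BoundedContinuousFunction.sub_apply, Real.norm_eq_abs, abs_le]
  constructor <;> linarith

theorem map_const [Nonempty X] (hS : IsSublinearTransition S) (c : ℝ) :
    S (const X c) = const X c := by
  ext x
  have hle : ∀ d : ℝ, S (const X d) x ≤ d := fun d => by simpa using hS.2.2 (const X d) x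
  have hge := hS.neg_apply_neg_le (const X c) x
  rw [show -const X c = const X (-c) by ext; simp] at hge
  simp only [const_apply]
  linarith [hle c, hle (-c), hge]

theorem apply_add_const [Nonempty X] (hS : IsSublinearTransition S) (f : X →ᵇ ℝ) (c : ℝ)
    (x : X) : S (f + const X c) x = S f x + c := by
  have hle := hS.2.1 f (const X c) x
  have hge := hS.2.1 (f + const X c) (const X (-c)) x
  rw [show f + const X c + const X (-c) = f by ext; simp] at hge
  rw [hS.map_const] at hle hge
  simp only [const_apply] at hle hge
  linarith

theorem opSemiNorm_inv_smul_sub_id_le_iff (hS : IsSublinearTransition S) {t : ℝ} (ht : 0 < t)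
    {r : ℝ} (hr : 0 ≤ r) :
    opSemiNorm (t⁻¹ • (S - id)) ≤ ENNReal.ofReal r ↔ ∀ f, ‖S f - f‖ ≤ r * t * ‖f‖ := by
  rw [opSemiNorm_le_ofReal_iff (by simp [hS.map_zero]) hr]
  refine forall_congr' fun f => ?_
  change ‖t⁻¹ • (S f - f)‖ ≤ r * ‖f‖ ↔ _
  rw [norm_smul, Real.norm_eq_abs, abs_inv, abs_of_pos ht, inv_mul_le_iff₀ ht, mul_assoc,
    mul_left_comm t]

end IsSublinearTransition

section IndicCompl

variable {X : Type*} [TopologicalSpace X] [DiscreteTopology X]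

/-- `S (indicCompl x) x` is the upper probability that the process started at `x` has left `x`. -/
noncomputable def indicCompl (x : X) : X →ᵇ ℝ := const X 1 - indic x

theorem indic_apply_of_ne {x y : X} (h : y ≠ x) : indic x y = 0 := by
  simp [indic, h]

@[simp] theorem indicCompl_apply_self (x : X) : indicCompl x x = 0 := by
  simp [indicCompl, indic]

theorem indicCompl_apply_of_ne {x y : X} (h : y ≠ x) : indicCompl x y = 1 := by
  simp [indicCompl, indic_apply_of_ne h]

theorem indicCompl_nonneg (x y : X) : 0 ≤ indicCompl x y := by
  by_cases h : y = x
  · simp [h]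
  · simp [indicCompl_apply_of_ne h]

theorem norm_indicCompl_le (x : X) : ‖indicCompl x‖ ≤ 1 := by
  refine (norm_le zero_le_one).2 fun y => ?_
  by_cases h : y = x
  · simp [h]
  · simp [indicCompl_apply_of_ne h]

end IndicCompl

namespace IsSublinearTransition

variable {X : Type*} [TopologicalSpace X] [DiscreteTopology X] {S : Op X}

theorem apply_indicCompl_nonneg (hS : IsSublinearTransition S) (x : X) :
    0 ≤ S (indicCompl x) x := by
  have := hS.apply_le_of_forall_le_zero (f := -indicCompl x)
    (fun y => by simpa using indicCompl_nonneg x y) x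
  linarith [hS.neg_apply_neg_le (indicCompl x) x]

theorem apply_indicCompl_le {r : ℝ} (hr : 0 ≤ r) (h : ∀ f, ‖S f - f‖ ≤ r * ‖f‖) (x : X) :
    S (indicCompl x) x ≤ r :=
  calc S (indicCompl x) x = (S (indicCompl x) - indicCompl x) x := by simp
    _ ≤ ‖S (indicCompl x) - indicCompl x‖ := apply_le_norm _ x
    _ ≤ r * ‖indicCompl x‖ := h _
    _ ≤ r := mul_le_of_le_one_right hr (norm_indicCompl_le x)

theorem apply_le_mul_apply_indicCompl (hS : IsSublinearTransition S) {g : X →ᵇ ℝ} {x : X}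
    (hgx : g x = 0) {r : ℝ} (hr : 0 ≤ r) (hg : ∀ y, g y ≤ r) :
    S g x ≤ r * S (indicCompl x) x := by
  have hle : ∀ y, g y ≤ (r • indicCompl x) y := fun y => by
    by_cases hy : y = x
    · subst hy; simp [hgx]
    · simpa [indicCompl_apply_of_ne hy] using hg y
  simpa [hS.1 r hr] using hS.mono hle x

/-- Shifting `f` by `f x` reduces to functions vanishing at `x`, which are dominated by
`2 ‖f‖ • indicCompl x`. -/
theorem norm_sub_le_of_apply_indicCompl_le (hS : IsSublinearTransition S) {b : ℝ} (hb : 0 ≤ b)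
    (hexit : ∀ x, S (indicCompl x) x ≤ b) (f : X →ᵇ ℝ) : ‖S f - f‖ ≤ 2 * b * ‖f‖ := by
  refine (norm_le (by positivity)).2 fun x => ?_
  have : Nonempty X := ⟨x⟩
  set g := f - const X (f x)
  have hfg : S f x - f x = S g x := by
    have := hS.apply_add_const g (f x) x
    rw [sub_add_cancel] at this
    linarith
  have hg : ∀ y, g y ≤ 2 * ‖f‖ ∧ -g y ≤ 2 * ‖f‖ := fun y => by
    simp only [g, BoundedContinuousFunction.sub_apply, const_apply]
    constructor <;> linarith [apply_le_norm f y, apply_le_norm f x, neg_norm_le_apply f y,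
      neg_norm_le_apply f x]
  have hup : ∀ g' : X →ᵇ ℝ, g' x = 0 → (∀ y, g' y ≤ 2 * ‖f‖) → S g' x ≤ 2 * b * ‖f‖ :=
    fun g' hg'x hg' => (hS.apply_le_mul_apply_indicCompl hg'x (by positivity) hg').trans <| by
      nlinarith [hexit x, norm_nonneg f]
  have h₁ := hup g (by simp [g]) fun y => (hg y).1
  have h₂ := hup (-g) (by simp [g]) fun y => (hg y).2
  rw [BoundedContinuousFunction.sub_apply, Real.norm_eq_abs, hfg, abs_le]
  constructor <;> linarith [hS.neg_apply_neg_le g x]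

theorem one_sub_apply_indicCompl_le (hS : IsSublinearTransition S) {x y : X} (h : y ≠ x) :
    1 - S (indicCompl y) y ≤ S (indicCompl x) y := by
  have : Nonempty X := ⟨x⟩
  have hind : ∀ z, indic x z ≤ indicCompl y z := fun z => by
    by_cases hzy : z = y
    · subst hzy; simp [indic_apply_of_ne h]
    · rw [indicCompl_apply_of_ne hzy]
      by_cases hzx : z = x
      · simp [hzx, indic]
      · simp [indic_apply_of_ne hzx]
  have hneg : -indicCompl x = indic x + const X (-1) := by ext; simp [indicCompl]; ring
  have := hS.neg_apply_neg_le (indicCompl x) y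
  rw [hneg, hS.apply_add_const] at this
  linarith [hS.mono hind y]

/-- Leaving `x` within `s + t`: either `S` leaves `x`, or it stays (with probability at least
`1 - 2A`) and then `R` leaves. -/
theorem apply_indicCompl_add_mul_le_comp {R : Op X} (hR : IsSublinearTransition R)
    (hS : IsSublinearTransition S) {A : ℝ} (hA : ∀ y, S (indicCompl y) y ≤ A) (hA2 : 2 * A ≤ 1)
    (x : X) :
    S (indicCompl x) x + (1 - 2 * A) * R (indicCompl x) x ≤ R (S (indicCompl x)) x := by
  have : Nonempty X := ⟨x⟩
  set α := S (indicCompl x) x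
  have hlow : ∀ y, ((1 - 2 * A) • indicCompl x + const X α) y ≤ S (indicCompl x) y := by
    intro y
    by_cases hy : y = x
    · subst hy; simp [α]
    · have := hS.one_sub_apply_indicCompl_le hy
      simp only [BoundedContinuousFunction.add_apply, BoundedContinuousFunction.smul_apply,
        indicCompl_apply_of_ne hy, const_apply, smul_eq_mul]
      linarith [hA x, hA y]
  have := hR.mono hlow x
  rwa [hR.apply_add_const, hR.1 _ (by linarith), BoundedContinuousFunction.smul_apply,
    smul_eq_mul, add_comm] at this

end IsSublinearTransition

section Semigroup

variable {X : Type*} [TopologicalSpace X]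

theorem norm_apply_sub_apply_le_of_le {T : ℝ → Op X}
    (hT : ∀ t : ℝ, 0 ≤ t → IsSublinearTransition (T t))
    (hTsg : ∀ s t : ℝ, 0 ≤ s → 0 ≤ t → T (s + t) = T s ∘ T t)
    {s t : ℝ} (ht : 0 ≤ t) (hts : t ≤ s) (f : X →ᵇ ℝ) :
    ‖T s f - T t f‖ ≤ ‖T (s - t) f - f‖ := by
  have hs : T s = T t ∘ T (s - t) := by
    rw [← hTsg t (s - t) ht (by linarith), add_sub_cancel]
  rw [hs]
  exact (hT t ht).norm_sub_le _ _

theorem norm_apply_sub_apply_le_mul_abs {T : ℝ → Op X}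
    (hT : ∀ t : ℝ, 0 ≤ t → IsSublinearTransition (T t))
    (hTsg : ∀ s t : ℝ, 0 ≤ s → 0 ≤ t → T (s + t) = T s ∘ T t)
    {C t₀ : ℝ} (hC : ∀ u, 0 < u → u ≤ t₀ → ∀ f, ‖T u f - f‖ ≤ C * u * ‖f‖)
    {s t : ℝ} (hs : 0 ≤ s) (ht : 0 ≤ t) (hst : |s - t| ≤ t₀) (f : X →ᵇ ℝ) :
    ‖T s f - T t f‖ ≤ C * |s - t| * ‖f‖ := by
  wlog hts : t ≤ s generalizing s t
  · rw [norm_sub_rev, abs_sub_comm]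
    exact this ht hs (by rwa [abs_sub_comm]) (le_of_not_ge hts)
  rcases hts.eq_or_lt with rfl | hts
  · simp
  rw [abs_of_pos (sub_pos.2 hts)] at hst ⊢
  exact (norm_apply_sub_apply_le_of_le hT hTsg ht hts.le f).trans
    (hC _ (sub_pos.2 hts) hst f)

theorem isUniformlyContinuousSG_of_limsup_lt_top {T : ℝ → Op X}
    (hT : ∀ t : ℝ, 0 ≤ t → IsSublinearTransition (T t))
    (hTsg : ∀ s t : ℝ, 0 ≤ s → 0 ≤ t → T (s + t) = T s ∘ T t)
    (h : limsup (fun t : ℝ => opSemiNorm (t⁻¹ • (T t - id))) (𝓝[>] 0) < ⊤) :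
    IsUniformlyContinuousSG T := by
  obtain ⟨C, hC, -⟩ := ENNReal.lt_iff_exists_nnreal_btwn.1 h
  have hev : ∀ᶠ u in 𝓝[>] 0, opSemiNorm (u⁻¹ • (T u - id)) ≤ ENNReal.ofReal C :=
    (eventually_lt_of_limsup_lt hC).mono fun u hu => by rw [ENNReal.ofReal_coe_nnreal]; exact hu.le
  obtain ⟨t₀, ht₀, hsub⟩ := mem_nhdsGT_iff_exists_Ioc_subset.1 hev
  have hlip : ∀ u, 0 < u → u ≤ t₀ → ∀ f, ‖T u f - f‖ ≤ C * u * ‖f‖ := fun u hu hut₀ =>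
    ((hT u hu.le).opSemiNorm_inv_smul_sub_id_le_iff hu C.2).1 (hsub ⟨hu, hut₀⟩)
  intro t ht
  have hbound : ∀ᶠ s in 𝓝[Set.Ici 0] t, opSemiNorm (T s - T t) ≤ ENNReal.ofReal (C * |s - t|) := by
    filter_upwards [self_mem_nhdsWithin, nhdsWithin_le_nhds
      (Metric.closedBall_mem_nhds t ht₀)] with s hs hst
    refine (opSemiNorm_le_ofReal_iff (by simp [(hT s hs).map_zero, (hT t ht).map_zero])
      (by positivity)).2 fun f => ?_
    exact norm_apply_sub_apply_le_mul_abs hT hTsg hlip hs ht hst f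
  have hlim : Tendsto (fun s => ENNReal.ofReal (C * |s - t|)) (𝓝[Set.Ici 0] t) (𝓝 0) := by
    have : Continuous fun s : ℝ => ENNReal.ofReal (C * |s - t|) :=
      ENNReal.continuous_ofReal.comp (by fun_prop)
    simpa using this.tendsto t |>.mono_left nhdsWithin_le_nhds
  exact tendsto_of_tendsto_of_tendsto_of_le_of_le' tendsto_const_nhds hlim
    (Eventually.of_forall fun _ => zero_le) hbound

variable [DiscreteTopology X]

theorem nat_mul_apply_indicCompl_le {T : ℝ → Op X}
    (hT : ∀ t : ℝ, 0 ≤ t → IsSublinearTransition (T t)) (hT0 : T 0 = id)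
    (hTsg : ∀ s t : ℝ, 0 ≤ s → 0 ≤ t → T (s + t) = T s ∘ T t)
    {t : ℝ} (ht : 0 ≤ t) {A : ℝ} (hA : ∀ y, T t (indicCompl y) y ≤ A) (hA2 : 2 * A ≤ 1)
    (x : X) (n : ℕ) :
    n * T t (indicCompl x) x * (1 - 2 * n * A) ≤ T (n * t) (indicCompl x) x := by
  induction n with
  | zero => simp [hT0]
  | succ n ih =>
    have hstep := (hT (n * t) (by positivity)).apply_indicCompl_add_mul_le_comp (hT t ht) hA hA2 x
    have hcomp : T (n * t) (T t (indicCompl x)) = T ((n + 1) * t) (indicCompl x) := by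
      rw [add_one_mul, hTsg _ _ (by positivity) ht, Function.comp_apply]
    rw [hcomp] at hstep
    have hα := (hT t ht).apply_indicCompl_nonneg x
    have hA0 : 0 ≤ A := hα.trans (hA x)
    push_cast
    rw [add_one_mul]
    nlinarith [mul_le_mul_of_nonneg_left ih (by linarith : 0 ≤ 1 - 2 * A),
      mul_nonneg hα (mul_nonneg hA0 (by positivity : (0 : ℝ) ≤ 2 * n + 2 + 4 * n ^ 2 * A))]

/-- With `A` the largest exit probability at time `t` and `n = ⌊1 / (4A)⌋`, the growth bound
makes the exit probabilities at time `n t` reach about `n A / 2 > 1/16`; hence `n t > t₀`, i.e.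
`A < t / (4 t₀)`. -/
theorem apply_indicCompl_le_of_forall_le {T : ℝ → Op X}
    (hT : ∀ t : ℝ, 0 ≤ t → IsSublinearTransition (T t)) (hT0 : T 0 = id)
    (hTsg : ∀ s t : ℝ, 0 ≤ s → 0 ≤ t → T (s + t) = T s ∘ T t)
    {t₀ : ℝ} (ht₀ : 0 < t₀) (hsmall : ∀ s, 0 < s → s ≤ t₀ → ∀ y, T s (indicCompl y) y ≤ 1 / 16)
    {t : ℝ} (ht : 0 < t) (htt₀ : t ≤ t₀) (x : X) :
    T t (indicCompl x) x ≤ t / (4 * t₀) := by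
  have : Nonempty X := ⟨x⟩
  set A := ⨆ y, T t (indicCompl y) y
  have hbdd : BddAbove (Set.range fun y => T t (indicCompl y) y) :=
    ⟨1 / 16, Set.forall_mem_range.2 (hsmall t ht htt₀)⟩
  have hle_A : ∀ y, T t (indicCompl y) y ≤ A := le_ciSup hbdd
  have hA16 : A ≤ 1 / 16 := ciSup_le (hsmall t ht htt₀)
  rcases ((hT t ht.le).apply_indicCompl_nonneg x |>.trans (hle_A x)).eq_or_lt with hA | hA
  · exact (hle_A x).trans (hA ▸ by positivity)
  set n := ⌊1 / (4 * A)⌋₊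
  have hnA : n * A ≤ 1 / 4 := by
    have := Nat.floor_le (a := 1 / (4 * A)) (by positivity)
    rw [le_div_iff₀ (by positivity)] at this
    linarith
  have hnA' : 1 / 4 < (n + 1) * A := by
    have := Nat.lt_floor_add_one (1 / (4 * A))
    rw [div_lt_iff₀ (by positivity)] at this
    linarith
  have hnt : t₀ < n * t := by
    by_contra! hnt
    have hn : (0 : ℝ) < n := by nlinarith
    have hA8 : A ≤ 1 / (8 * n) := ciSup_le fun y => by
      have := nat_mul_apply_indicCompl_le hT hT0 hTsg ht.le hle_A (by linarith) y n
      have := hsmall _ (by positivity) hnt y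
      rw [le_div_iff₀ (by positivity)]
      nlinarith [(hT t ht.le).apply_indicCompl_nonneg y]
    rw [le_div_iff₀ (by positivity)] at hA8
    linarith
  calc T t (indicCompl x) x ≤ A := hle_A x
    _ ≤ t / (4 * t₀) := by
      rw [le_div_iff₀ (by positivity)]
      nlinarith

theorem limsup_opSemiNorm_lt_top_of_isUniformlyContinuousSG {T : ℝ → Op X}
    (hT : ∀ t : ℝ, 0 ≤ t → IsSublinearTransition (T t)) (hT0 : T 0 = id)
    (hTsg : ∀ s t : ℝ, 0 ≤ s → 0 ≤ t → T (s + t) = T s ∘ T t)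
    (hUC : IsUniformlyContinuousSG T) :
    limsup (fun t : ℝ => opSemiNorm (t⁻¹ • (T t - id))) (𝓝[>] 0) < ⊤ := by
  have h0 := hUC 0 le_rfl
  simp only [hT0] at h0
  have hev : ∀ᶠ s in 𝓝[>] 0, opSemiNorm (T s - id) ≤ ENNReal.ofReal (1 / 16) :=
    (h0.mono_left (nhdsWithin_mono _ Set.Ioi_subset_Ici_self)).eventually
      (Iic_mem_nhds (by norm_num))
  obtain ⟨t₀, ht₀ : 0 < t₀, hsub⟩ := mem_nhdsGT_iff_exists_Ioc_subset.1 hev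
  have hexit : ∀ s, 0 < s → s ≤ t₀ → ∀ y, T s (indicCompl y) y ≤ 1 / 16 := fun s hs hst =>
    IsSublinearTransition.apply_indicCompl_le (by norm_num) <|
      (opSemiNorm_le_ofReal_iff (by simp [(hT s hs.le).map_zero]) (by norm_num)).1
        (hsub ⟨hs, hst⟩)
  refine lt_of_le_of_lt (limsup_le_of_le (by isBoundedDefault) ?_)
    (ENNReal.ofReal_lt_top (r := 1 / (2 * t₀)))
  filter_upwards [Ioc_mem_nhdsGT ht₀] with t ⟨ht, htt₀⟩
  rw [(hT t ht.le).opSemiNorm_inv_smul_sub_id_le_iff ht (by positivity)]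
  intro f
  convert (hT t ht.le).norm_sub_le_of_apply_indicCompl_le (by positivity)
    (apply_indicCompl_le_of_forall_le hT hT0 hTsg ht₀ hexit ht htt₀) f using 1
  field_simp
  ring

end Semigroup

theorem stmt_13_general {X : Type*} [TopologicalSpace X] [DiscreteTopology X]
    (T : ℝ → Op X)
    (hT : ∀ t : ℝ, 0 ≤ t → IsSublinearTransition (T t))
    (hT0 : T 0 = id)
    (hTsg : ∀ s t : ℝ, 0 ≤ s → 0 ≤ t → T (s + t) = T s ∘ T t) :
    IsUniformlyContinuousSG T ↔
      Filter.limsup (fun t : ℝ => opSemiNorm (t⁻¹ • (T t - id)))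
        (nhdsWithin 0 (Set.Ioi 0)) < ⊤ :=
  ⟨limsup_opSemiNorm_lt_top_of_isUniformlyContinuousSG hT hT0 hTsg,
    isUniformlyContinuousSG_of_limsup_lt_top hT hTsg⟩

theorem stmt_13 {X : Type*} [Countable X] [TopologicalSpace X] [DiscreteTopology X]
    (T : ℝ → Op X)
    (hT : ∀ t : ℝ, 0 ≤ t → IsSublinearTransition (T t))
    (hT0 : T 0 = id)
    (hTsg : ∀ s t : ℝ, 0 ≤ s → 0 ≤ t → T (s + t) = T s ∘ T t) :
    IsUniformlyContinuousSG T ↔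
      Filter.limsup (fun t : ℝ => opSemiNorm (t⁻¹ • (T t - id)))
        (nhdsWithin 0 (Set.Ioi 0)) < ⊤ :=
  stmt_13_general T hT hT0 hTsg
end

section
/- Let Q be a bounded sublinear rate operator on ℬ, and for each t ≥ 0 let e^{tQ} denote the limit in operator seminorm of the sequence ((I + (t/n)Q)^n)_{n∈ℕ}. Then Q is downward continuous if and only if e^{tQ} is downward continuous for every t ≥ 0. -/
/-!
If `h ‖Q‖ ≤ 1`, the positive maximum principle makes the Euler step `I + hQ` monotone, so
downward continuity of `Q` passes to the iterates `(I + (t/n)Q)^n`; conversely it passes from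
`e^{tQ}` to the difference quotients `(e^{tQ} - I)/t`. A decreasing convergent sequence is
bounded, and downward continuity survives limits that are uniform on bounded sets. Both limits
are of this kind: `(I + (t/n)Q)^n → e^{tQ}` by the definition of the operator distance, and
`(e^{tQ} - I)/t → Q` as `t ↓ 0` by the Taylor estimate
`‖e^{tQ} f - f - t Q f‖ ≤ t ‖Q‖ (e^{t ‖Q‖} - 1) ‖f‖`, inherited from the Euler iterates.
-/

open Filter Topology BoundedContinuousFunction ENNReal NNReal

section OperatorDistance

variable {X : Type*} [TopologicalSpace X]

theorem nnnorm_apply_le_opSemiNorm_mul (A : Op X) {f : X →ᵇ ℝ} (hf : f ≠ 0) :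
    (‖A f‖₊ : ℝ≥0∞) ≤ opSemiNorm A * ‖f‖₊ :=
  (ENNReal.div_le_iff (by simpa using hf) ENNReal.coe_ne_top).mp
    (le_iSup₂ (f := fun (g : X →ᵇ ℝ) (_ : g ≠ 0) => (‖A g‖₊ : ℝ≥0∞) / ‖g‖₊) f hf)

theorem nnnorm_sub_apply_le_opDist_mul (A B : Op X) (f : X →ᵇ ℝ) :
    (‖A f - B f‖₊ : ℝ≥0∞) ≤ opDist A B * (1 + ‖f‖₊) := by
  rcases eq_or_ne f 0 with rfl | hf
  · simp [opDist]
  · calc (‖A f - B f‖₊ : ℝ≥0∞) ≤ opSemiNorm (A - B) * ‖f‖₊ :=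
          nnnorm_apply_le_opSemiNorm_mul (A - B) hf
      _ ≤ opDist A B * (1 + ‖f‖₊) := by gcongr <;> exact le_add_self

theorem tendstoUniformlyOn_closedBall_of_tendsto_opDist {ι : Type*} {l : Filter ι}
    {A : ι → Op X} {B : Op X} (h : Tendsto (fun i => opDist (A i) B) l (𝓝 0)) (R : ℝ) :
    TendstoUniformlyOn A B l (Metric.closedBall 0 R) := by
  have hlim : Tendsto (fun i => opDist (A i) B * (1 + ENNReal.ofReal R)) l (𝓝 0) := by
    simpa using ENNReal.Tendsto.mul_const h (Or.inr (by simp))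
  refine EMetric.tendstoUniformlyOn_iff.mpr fun ε hε => ?_
  filter_upwards [hlim.eventually (gt_mem_nhds hε)] with i hi f hf
  refine lt_of_le_of_lt ?_ hi
  rw [edist_comm, edist_eq_enorm_sub]
  calc ‖A i f - B f‖ₑ ≤ opDist (A i) B * (1 + ‖f‖₊) := nnnorm_sub_apply_le_opDist_mul _ _ f
    _ ≤ opDist (A i) B * (1 + ENNReal.ofReal R) := by
      gcongr
      rw [← ENNReal.ofReal_coe_nnreal, coe_nnnorm]
      exact ENNReal.ofReal_le_ofReal (mem_closedBall_zero_iff.mp hf)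

end OperatorDistance

section DownwardContinuity

variable {X : Type*} [TopologicalSpace X]

theorem norm_le_max_of_antitone_of_tendsto {f : ℕ → X →ᵇ ℝ} {g : X →ᵇ ℝ}
    (hdec : ∀ n x, f (n + 1) x ≤ f n x) (hlim : ∀ x, Tendsto (fun n => f n x) atTop (𝓝 (g x)))
    (k : ℕ) : ‖f k‖ ≤ max ‖f 0‖ ‖g‖ := by
  refine (norm_le (le_max_of_le_left (norm_nonneg _))).mpr fun y => abs_le.mpr ?_
  have hanti : Antitone (fun n => f n y) := antitone_nat_of_succ_le fun n => hdec n y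
  constructor
  · linarith [hanti.le_of_tendsto (hlim y) k, neg_norm_le_apply g y, le_max_right ‖f 0‖ ‖g‖]
  · linarith [hanti (Nat.zero_le k), apply_le_norm (f 0) y, le_max_left ‖f 0‖ ‖g‖]

theorem DownwardContinuous.of_tendstoUniformlyOn {ι : Type*} {l : Filter ι} [l.NeBot]
    {A : ι → Op X} {B : Op X} (hA : ∀ᶠ i in l, DownwardContinuous (A i))
    (hAB : ∀ R : ℝ, TendstoUniformlyOn A B l (Metric.closedBall 0 R)) :
    DownwardContinuous B := by
  intro f g hdec hlim x
  set R := max ‖f 0‖ ‖g‖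
  have hf : ∀ k, f k ∈ Metric.closedBall 0 R := fun k =>
    mem_closedBall_zero_iff.mpr (norm_le_max_of_antitone_of_tendsto hdec hlim k)
  have hg : g ∈ Metric.closedBall 0 R := mem_closedBall_zero_iff.mpr (le_max_right _ _)
  have heval := lipschitz_eval_const (β := ℝ) x
  have hunif : TendstoUniformly (fun i k => A i (f k) x) (fun k => B (f k) x) l :=
    heval.uniformContinuous.comp_tendstoUniformly
      (tendstoUniformlyOn_univ.mp (((hAB R).comp f).mono fun k _ => hf k))
  exact hunif.tendsto_of_eventually_tendsto (hA.mono fun i hi => hi f g hdec hlim x)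
    ((heval.continuous.tendsto _).comp ((hAB R).tendsto_at hg))

theorem DownwardContinuous.comp {A B : Op X} (hA : DownwardContinuous A)
    (hB : DownwardContinuous B) (hBm : Monotone B) : DownwardContinuous (A ∘ B) :=
  fun f g hdec hlim => hA (fun n => B (f n)) (B g) (fun n => hBm (hdec n)) (hB f g hdec hlim)

theorem DownwardContinuous.iterate {A : Op X} (hA : DownwardContinuous A) (hAm : Monotone A) :
    ∀ n, DownwardContinuous A^[n]
  | 0 => fun _ _ _ hlim => hlim
  | n + 1 => by
    rw [Function.iterate_succ']
    exact hA.comp (hA.iterate hAm n) (hAm.iterate n)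

theorem DownwardContinuous.id_add_smul {A : Op X} (hA : DownwardContinuous A) (c : ℝ) :
    DownwardContinuous (fun f => f + c • A f) :=
  fun f g hdec hlim x => by
    simpa using (hlim x).add ((hA f g hdec hlim x).const_mul c)

theorem DownwardContinuous.smul_sub_id {A : Op X} (hA : DownwardContinuous A) (c : ℝ) :
    DownwardContinuous (fun f => c • (A f - f)) :=
  fun f g hdec hlim x => by
    simpa using ((hA f g hdec hlim x).sub (hlim x)).const_mul c

end DownwardContinuity

section Indicator

variable {X : Type*} [TopologicalSpace X] [DiscreteTopology X]

theorem indic_apply_self (x : X) : indic x x = 1 := by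
  simp [indic]

theorem norm_indic_le (x : X) : ‖indic x‖ ≤ 1 := by
  refine (norm_le zero_le_one).mpr fun y => ?_
  rcases eq_or_ne y x with rfl | hy
  · simp [indic_apply_self]
  · simp [indic_apply_of_ne hy]

end Indicator

namespace IsSublinearRate

variable {X : Type*} [TopologicalSpace X] {Q : Op X}

theorem map_zero (hQ : IsSublinearRate Q) : Q 0 = 0 := by
  simpa using hQ.1 0 le_rfl 0

theorem norm_le (hQ : IsSublinearRate Q) (hQb : opSemiNorm Q ≠ ⊤) (f : X →ᵇ ℝ) :
    ‖Q f‖ ≤ (opSemiNorm Q).toReal * ‖f‖ := by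
  rcases eq_or_ne f 0 with rfl | hf
  · simp [hQ.map_zero]
  · simpa [ENNReal.toReal_mul] using
      ENNReal.toReal_mono (mul_ne_top hQb coe_ne_top) (nnnorm_apply_le_opSemiNorm_mul Q hf)

theorem sub_le (hQ : IsSublinearRate Q) (f g : X →ᵇ ℝ) (x : X) :
    Q f x - Q g x ≤ Q (f - g) x := by
  have := hQ.2.1 (f - g) g x
  rw [sub_add_cancel] at this
  linarith

theorem norm_sub_le (hQ : IsSublinearRate Q) (hQb : opSemiNorm Q ≠ ⊤) (f g : X →ᵇ ℝ) :
    ‖Q f - Q g‖ ≤ (opSemiNorm Q).toReal * ‖f - g‖ := by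
  have hbound : ∀ u v x, Q u x - Q v x ≤ (opSemiNorm Q).toReal * ‖u - v‖ := fun u v x =>
    (hQ.sub_le u v x).trans ((apply_le_norm _ x).trans (hQ.norm_le hQb _))
  refine (BoundedContinuousFunction.norm_le (by positivity)).mpr fun x =>
    abs_sub_le_iff.mpr ⟨hbound f g x, ?_⟩
  rw [norm_sub_rev]
  exact hbound g f x

theorem apply_le_mul_neg_of_nonpos [DiscreteTopology X] (hQ : IsSublinearRate Q)
    (hQb : opSemiNorm Q ≠ ⊤) {u : X →ᵇ ℝ} (hu : u ≤ 0) (x : X) :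
    Q u x ≤ (opSemiNorm Q).toReal * -u x := by
  have : Nonempty X := ⟨x⟩
  -- `w` attains its maximum `0` at `x`, where the positive maximum principle applies to it.
  set w := u - u x • indic x
  have hwx : w x = 0 := by simp [w, indic_apply_self]
  have hw : ∀ y, w y ≤ w x := by
    intro y
    rcases eq_or_ne y x with rfl | hy
    · rfl
    · simpa [w, hwx, indic_apply_of_ne hy] using hu y
  have hQw : Q w x ≤ 0 :=
    hQ.2.2.2 w x (ciSup_eq_of_forall_le_of_forall_lt_exists_gt hw fun _ hv => ⟨x, hv⟩) hwx.ge
  have hQind : Q (-indic x) x ≤ (opSemiNorm Q).toReal := by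
    have := (apply_le_norm _ x).trans (hQ.norm_le hQb (-indic x))
    rw [norm_neg] at this
    nlinarith [norm_indic_le x, ENNReal.toReal_nonneg (a := opSemiNorm Q)]
  have hux : 0 ≤ -u x := neg_nonneg.mpr (hu x)
  calc Q u x = Q (w + (-u x) • -indic x) x := by simp [w]
    _ ≤ Q w x + -u x * Q (-indic x) x := by
      rw [← smul_eq_mul, ← BoundedContinuousFunction.smul_apply, ← hQ.1 _ hux]
      exact hQ.2.1 _ _ x
    _ ≤ (opSemiNorm Q).toReal * -u x := by nlinarith

end IsSublinearRate

section EulerScheme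

variable {X : Type*} [TopologicalSpace X] {Q : Op X}

def eulerStep (Q : Op X) (h : ℝ) : Op X := fun f => f + h • Q f

theorem euler_eq_iterate_eulerStep (Q : Op X) (t : ℝ) (n : ℕ) :
    euler Q t n = (eulerStep Q (t / n))^[n] :=
  rfl

theorem IsSublinearRate.monotone_eulerStep [DiscreteTopology X] (hQ : IsSublinearRate Q)
    (hQb : opSemiNorm Q ≠ ⊤) {h : ℝ} (h0 : 0 ≤ h) (hL : h * (opSemiNorm Q).toReal ≤ 1) :
    Monotone (eulerStep Q h) := by
  intro f g hfg x
  have hdiff : Q f x - Q g x ≤ (opSemiNorm Q).toReal * (g x - f x) := by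
    simpa using (hQ.sub_le f g x).trans (hQ.apply_le_mul_neg_of_nonpos hQb (sub_nonpos.mpr hfg) x)
  have hfgx : 0 ≤ g x - f x := sub_nonneg.mpr (hfg x)
  show (f + h • Q f) x ≤ (g + h • Q g) x
  simp only [BoundedContinuousFunction.add_apply, BoundedContinuousFunction.smul_apply,
    smul_eq_mul]
  nlinarith [mul_le_mul_of_nonneg_left hdiff h0, mul_le_mul_of_nonneg_right hL hfgx]

theorem IsSublinearRate.norm_iterate_eulerStep_sub_le (hQ : IsSublinearRate Q)
    (hQb : opSemiNorm Q ≠ ⊤) {h : ℝ} (h0 : 0 ≤ h) (n : ℕ) (f : X →ᵇ ℝ) :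
    ‖(eulerStep Q h)^[n] f - f‖ ≤ ((1 + h * (opSemiNorm Q).toReal) ^ n - 1) * ‖f‖ := by
  set L := (opSemiNorm Q).toReal
  induction n with
  | zero => simp
  | succ n ih =>
    set u := (eulerStep Q h)^[n] f
    have hQu : ‖h • Q u‖ ≤ h * L * (1 + h * L) ^ n * ‖f‖ :=
      calc ‖h • Q u‖ = h * ‖Q u‖ := by rw [norm_smul, Real.norm_of_nonneg h0]
        _ ≤ h * (L * (‖u - f‖ + ‖f‖)) := by
          gcongr
          exact (hQ.norm_le hQb u).trans (by gcongr; exact norm_le_norm_sub_add u f)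
        _ ≤ h * (L * (((1 + h * L) ^ n - 1) * ‖f‖ + ‖f‖)) := by gcongr
        _ = h * L * (1 + h * L) ^ n * ‖f‖ := by ring
    calc ‖(eulerStep Q h)^[n + 1] f - f‖ = ‖(u - f) + h • Q u‖ := by
          rw [Function.iterate_succ_apply']
          change ‖(u + h • Q u) - f‖ = _
          abel_nf
      _ ≤ ‖u - f‖ + ‖h • Q u‖ := norm_add_le _ _
      _ ≤ ((1 + h * L) ^ n - 1) * ‖f‖ + h * L * (1 + h * L) ^ n * ‖f‖ := add_le_add ih hQu
      _ = ((1 + h * L) ^ (n + 1) - 1) * ‖f‖ := by ring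

theorem IsSublinearRate.norm_iterate_eulerStep_sub_sub_le (hQ : IsSublinearRate Q)
    (hQb : opSemiNorm Q ≠ ⊤) {h : ℝ} (h0 : 0 ≤ h) (n : ℕ) (f : X →ᵇ ℝ) :
    ‖(eulerStep Q h)^[n] f - f - (n * h) • Q f‖ ≤
      n * (h * (opSemiNorm Q).toReal) * ((1 + h * (opSemiNorm Q).toReal) ^ n - 1) * ‖f‖ := by
  set L := (opSemiNorm Q).toReal
  have hhL : 0 ≤ h * L := by positivity
  induction n with
  | zero => simp
  | succ n ih =>
    set u := (eulerStep Q h)^[n] f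
    have hQu : ‖h • (Q u - Q f)‖ ≤ h * L * ((1 + h * L) ^ n - 1) * ‖f‖ :=
      calc ‖h • (Q u - Q f)‖ = h * ‖Q u - Q f‖ := by rw [norm_smul, Real.norm_of_nonneg h0]
        _ ≤ h * (L * (((1 + h * L) ^ n - 1) * ‖f‖)) := by
          gcongr
          exact (hQ.norm_sub_le hQb u f).trans
            (by gcongr; exact hQ.norm_iterate_eulerStep_sub_le hQb h0 n f)
        _ = h * L * ((1 + h * L) ^ n - 1) * ‖f‖ := by ring
    have hpow : (1 + h * L) ^ n ≤ (1 + h * L) ^ (n + 1) :=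
      pow_le_pow_right₀ (le_add_of_nonneg_right hhL) n.le_succ
    calc ‖(eulerStep Q h)^[n + 1] f - f - ((n + 1 : ℕ) * h) • Q f‖
        = ‖(u - f - (n * h) • Q f) + h • (Q u - Q f)‖ := by
          rw [Function.iterate_succ_apply']
          change ‖(u + h • Q u) - f - _‖ = _
          push_cast
          congr 1
          module
      _ ≤ ‖u - f - (n * h) • Q f‖ + ‖h • (Q u - Q f)‖ := norm_add_le _ _
      _ ≤ n * (h * L) * ((1 + h * L) ^ n - 1) * ‖f‖ + h * L * ((1 + h * L) ^ n - 1) * ‖f‖ :=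
          add_le_add ih hQu
      _ = (n + 1) * (h * L) * ((1 + h * L) ^ n - 1) * ‖f‖ := by ring
      _ ≤ ((n + 1 : ℕ) : ℝ) * (h * L) * ((1 + h * L) ^ (n + 1) - 1) * ‖f‖ := by
          push_cast
          gcongr

theorem IsSublinearRate.norm_euler_sub_sub_le (hQ : IsSublinearRate Q) (hQb : opSemiNorm Q ≠ ⊤)
    {t : ℝ} (ht : 0 ≤ t) {n : ℕ} (hn : n ≠ 0) (f : X →ᵇ ℝ) :
    ‖euler Q t n f - f - t • Q f‖ ≤
      t * (opSemiNorm Q).toReal * (Real.exp (t * (opSemiNorm Q).toReal) - 1) * ‖f‖ := by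
  set L := (opSemiNorm Q).toReal
  have hL0 : 0 ≤ L := ENNReal.toReal_nonneg
  have hn' : (n : ℝ) ≠ 0 := Nat.cast_ne_zero.mpr hn
  have hstep : (n : ℝ) * (t / n) = t := by field_simp
  have hexp : (1 + t / n * L) ^ n ≤ Real.exp (t * L) := by
    simpa [neg_div, div_mul_eq_mul_div] using Real.one_sub_div_pow_le_exp_neg (n := n)
      (t := -(t * L)) (by linarith [n.cast_nonneg (α := ℝ), mul_nonneg ht hL0])
  have key := hQ.norm_iterate_eulerStep_sub_sub_le hQb (div_nonneg ht n.cast_nonneg) n f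
  rw [hstep, ← mul_assoc, hstep, ← euler_eq_iterate_eulerStep] at key
  refine key.trans ?_
  gcongr

theorem IsSublinearRate.norm_sub_sub_le_of_tendsto_opDist (hQ : IsSublinearRate Q)
    (hQb : opSemiNorm Q ≠ ⊤) {t : ℝ} (ht : 0 ≤ t) {Et : Op X}
    (hE : Tendsto (fun n => opDist (euler Q t n) Et) atTop (𝓝 0)) (f : X →ᵇ ℝ) :
    ‖Et f - f - t • Q f‖ ≤
      t * (opSemiNorm Q).toReal * (Real.exp (t * (opSemiNorm Q).toReal) - 1) * ‖f‖ := by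
  have hlim : Tendsto (fun n => euler Q t n f) atTop (𝓝 (Et f)) :=
    (tendstoUniformlyOn_closedBall_of_tendsto_opDist hE ‖f‖).tendsto_at (by simp)
  refine le_of_tendsto ((hlim.sub_const f).sub_const (t • Q f)).norm ?_
  filter_upwards [eventually_ne_atTop 0] with n hn
  exact hQ.norm_euler_sub_sub_le hQb ht hn f

theorem IsSublinearRate.tendstoUniformlyOn_smul_sub_of_tendsto_opDist (hQ : IsSublinearRate Q)
    (hQb : opSemiNorm Q ≠ ⊤) {E : ℝ → Op X}
    (hE : ∀ t : ℝ, 0 ≤ t → Tendsto (fun n => opDist (euler Q t n) (E t)) atTop (𝓝 0)) (R : ℝ) :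
    TendstoUniformlyOn (fun t f => t⁻¹ • (E t f - f)) Q (𝓝[>] 0) (Metric.closedBall 0 R) := by
  set L := (opSemiNorm Q).toReal
  have hL0 : 0 ≤ L := ENNReal.toReal_nonneg
  have hbound : Tendsto (fun t => L * (Real.exp (t * L) - 1) * R) (𝓝[>] 0) (𝓝 0) := by
    have : Continuous fun t => L * (Real.exp (t * L) - 1) * R := by fun_prop
    simpa using (this.tendsto 0).mono_left nhdsWithin_le_nhds
  refine Metric.tendstoUniformlyOn_iff.mpr fun ε hε => ?_
  filter_upwards [hbound.eventually (gt_mem_nhds hε), self_mem_nhdsWithin] with t hbt ht f hf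
  refine lt_of_le_of_lt ?_ hbt
  have ht0 : 0 < t := ht
  calc dist (Q f) (t⁻¹ • (E t f - f)) = t⁻¹ * ‖E t f - f - t • Q f‖ := by
        rw [dist_comm, dist_eq_norm, ← norm_smul_of_nonneg (inv_nonneg.mpr ht0.le)]
        congr 1
        rw [smul_sub t⁻¹ (E t f - f), smul_smul, inv_mul_cancel₀ ht0.ne', one_smul]
    _ ≤ t⁻¹ * (t * L * (Real.exp (t * L) - 1) * ‖f‖) := by
        gcongr
        exact hQ.norm_sub_sub_le_of_tendsto_opDist hQb ht0.le (hE t ht0.le) f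
    _ = L * (Real.exp (t * L) - 1) * ‖f‖ := by field_simp
    _ ≤ L * (Real.exp (t * L) - 1) * R := by
        have : 0 ≤ Real.exp (t * L) - 1 := by
          linarith [Real.add_one_le_exp (t * L), mul_nonneg ht0.le hL0]
        gcongr
        exact mem_closedBall_zero_iff.mp hf

end EulerScheme

theorem stmt_19_general {X : Type*} [TopologicalSpace X] [DiscreteTopology X]
    (Q : Op X) (hQ : IsSublinearRate Q) (hQb : opSemiNorm Q ≠ ⊤)
    (E : ℝ → Op X)
    (hE : ∀ t : ℝ, 0 ≤ t → Tendsto (fun n => opDist (euler Q t n) (E t)) atTop (nhds 0)) :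
    DownwardContinuous Q ↔ ∀ t : ℝ, 0 ≤ t → DownwardContinuous (E t) := by
  constructor
  · intro hQdc t ht
    refine DownwardContinuous.of_tendstoUniformlyOn ?_
      (tendstoUniformlyOn_closedBall_of_tendsto_opDist (hE t ht))
    filter_upwards [eventually_ge_atTop ⌈t * (opSemiNorm Q).toReal⌉₊] with n hn
    have hstep : t / n * (opSemiNorm Q).toReal ≤ 1 := by
      rcases n.eq_zero_or_pos with rfl | hn0
      · simp
      · rw [div_mul_eq_mul_div, div_le_one (by exact_mod_cast hn0)]
        exact Nat.ceil_le.mp hn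
    rw [euler_eq_iterate_eulerStep]
    exact (hQdc.id_add_smul _).iterate (hQ.monotone_eulerStep hQb (by positivity) hstep) n
  · intro hEdc
    refine DownwardContinuous.of_tendstoUniformlyOn ?_
      (hQ.tendstoUniformlyOn_smul_sub_of_tendsto_opDist hQb hE)
    filter_upwards [self_mem_nhdsWithin] with t (ht : 0 < t)
    exact (hEdc t ht.le).smul_sub_id t⁻¹

theorem stmt_19 {X : Type*} [Countable X] [TopologicalSpace X] [DiscreteTopology X]
    (Q : Op X) (hQ : IsSublinearRate Q) (hQb : opSemiNorm Q ≠ ⊤)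
    (E : ℝ → Op X)
    (hE : ∀ t : ℝ, 0 ≤ t → Tendsto (fun n => opDist (euler Q t n) (E t)) atTop (nhds 0)) :
    DownwardContinuous Q ↔ ∀ t : ℝ, 0 ≤ t → DownwardContinuous (E t) :=
  stmt_19_general Q hQ hQb E hE
end
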